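/- Protocol 1 correctness: Given a perfect d-box and a perfect d'-box, the following local protocol simulates a dd'-box exactly. Alice inputs X into the d-box getting α; she inputs X into the d'-box if α = d−1 and 0 otherwise, getting α'; she outputs a = α'd + α. Bob inputs Y into both boxes, getting β and β', and outputs b = β'd + β. Then the joint distribution of (a,b) given (X,Y) equals the dd'-box: probability 1/(dd') whenever (b − a) mod dd' = X·Y, and 0 otherwise. -/
import Mathlib


/-- The `d`-box: `p(αβ|XY) = 1/d` if `(β − α) mod d = X·Y`, else `0`. -/
noncomputable def dBox (d : ℕ) : Fin 2 → Fin 2 → Fin d → Fin d → ℝ :=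
  fun X Y α β => if (β.val + (d - α.val)) % d = X.val * Y.val then 1 / d else 0

/-- The joint output distribution of Protocol 1: Alice inputs `X` into the
`d`-box getting `α`; she inputs `X` into the `d'`-box if `α = d−1` and `0`
otherwise, getting `α'`; she outputs `a = α'd + α`.  Bob inputs `Y` into both
boxes, getting `β,β'`, and outputs `b = β'd + β`.  The two boxes are used
independently. -/
noncomputable def protocol1 (d d' : ℕ) :
    Fin 2 → Fin 2 → Fin (d * d') → Fin (d * d') → ℝ :=
  fun X Y a b =>
    ∑ α : Fin d, ∑ β : Fin d, ∑ α' : Fin d', ∑ β' : Fin d',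
      dBox d X Y α β *
      dBox d' (if α.val = d - 1 then X else 0) Y α' β' *
      (if a.val = α'.val * d + α.val ∧ b.val = β'.val * d + β.val then 1 else 0)

private lemma qr_eq {d q t r s : ℕ} (hr : r < d) (hs : s < d) :
    t * d + s = q * d + r ↔ (t = q ∧ s = r) := by
  constructor
  · intro h
    have h1 : s = r := by
      have := congrArg (· % d) h
      simpa [Nat.mul_add_mod', Nat.mod_eq_of_lt hr, Nat.mod_eq_of_lt hs] using this
    refine ⟨?_, h1⟩
    have hd0 : 0 < d := by omega
    exact Nat.eq_of_mul_eq_mul_right hd0 (by omega)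
  · rintro ⟨rfl, rfl⟩; rfl

private lemma mod_cond {d r s : ℕ} (k : ℕ) (hr : r < d) (hs : s < d) :
    (s + (d - r)) % d = k ↔ ((r ≤ s ∧ s = r + k) ∨ (s < r ∧ s + d = r + k)) := by
  rcases le_or_gt r s with h | h
  · have e : s + (d - r) = d + (s - r) := by omega
    rw [e, Nat.add_mod_left, Nat.mod_eq_of_lt (by omega)]
    omega
  · rw [Nat.mod_eq_of_lt (by omega)]
    omega

private lemma cond0 {D A B : ℕ} (hA : A < D) (hB : B < D) :
    ((A ≤ B ∧ B = A + 0) ∨ (B < A ∧ B + D = A + 0)) ↔ B = A := by omega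

private lemma cond1 {D A B : ℕ} (hD : 2 ≤ D) (hA : A < D) (hB : B < D) :
    ((A ≤ B ∧ B = A + 1) ∨ (B < A ∧ B + D = A + 1)) ↔
      (B = A + 1 ∨ (A = D - 1 ∧ B = 0)) := by omega

private lemma pick_val {d d' : ℕ} (hd : 0 < d) {α : Fin d} {α' : Fin d'} {a : Fin (d * d')}
    (h : a.val = α'.val * d + α.val) : α.val = a.val % d ∧ α'.val = a.val / d := by
  constructor
  · rw [h, Nat.mul_add_mod', Nat.mod_eq_of_lt α.isLt]
  · rw [h, mul_comm, Nat.mul_add_div hd, Nat.div_eq_of_lt α.isLt, add_zero]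

private lemma sum_pick {d d' : ℕ} (hd : 0 < d)
    (F : Fin d → Fin d → Fin d' → Fin d' → ℝ) (a b : Fin (d * d')) :
    (∑ α : Fin d, ∑ β : Fin d, ∑ α' : Fin d', ∑ β' : Fin d',
        F α β α' β' *
          (if a.val = α'.val * d + α.val ∧ b.val = β'.val * d + β.val then (1:ℝ) else 0))
      = F ⟨a.val % d, Nat.mod_lt _ hd⟩ ⟨b.val % d, Nat.mod_lt _ hd⟩
          ⟨a.val / d, Nat.div_lt_of_lt_mul a.isLt⟩
          ⟨b.val / d, Nat.div_lt_of_lt_mul b.isLt⟩ := by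
  rw [Fintype.sum_eq_single (⟨a.val % d, Nat.mod_lt _ hd⟩ : Fin d) ?hα,
      Fintype.sum_eq_single (⟨b.val % d, Nat.mod_lt _ hd⟩ : Fin d) ?hβ,
      Fintype.sum_eq_single (⟨a.val / d, Nat.div_lt_of_lt_mul a.isLt⟩ : Fin d') ?hα',
      Fintype.sum_eq_single (⟨b.val / d, Nat.div_lt_of_lt_mul b.isLt⟩ : Fin d') ?hβ',
      if_pos ⟨(Nat.div_add_mod' a.val d).symm, (Nat.div_add_mod' b.val d).symm⟩, mul_one]
  case hα =>
    intro α hα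
    refine Finset.sum_eq_zero fun β _ => Finset.sum_eq_zero fun α' _ =>
      Finset.sum_eq_zero fun β' _ => ?_
    rw [if_neg, mul_zero]
    rintro ⟨h1, -⟩
    exact hα (Fin.ext (pick_val hd h1).1)
  case hβ =>
    intro β hβ
    refine Finset.sum_eq_zero fun α' _ => Finset.sum_eq_zero fun β' _ => ?_
    rw [if_neg, mul_zero]
    rintro ⟨-, h2⟩
    exact hβ (Fin.ext (pick_val hd h2).1)
  case hα' =>
    intro α' hα'
    refine Finset.sum_eq_zero fun β' _ => ?_
    rw [if_neg, mul_zero]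
    rintro ⟨h1, -⟩
    exact hα' (Fin.ext (pick_val hd h1).2)
  case hβ' =>
    intro β' hβ'
    rw [if_neg, mul_zero]
    rintro ⟨-, h2⟩
    exact hβ' (Fin.ext (pick_val hd h2).2)

private lemma prod_ite {d d' : ℕ} (P Q : Prop) [Decidable P] [Decidable Q] :
    (if P then (1:ℝ)/d else 0) * (if Q then (1:ℝ)/d' else 0)
      = if P ∧ Q then 1/((d:ℝ)*d') else 0 := by
  by_cases hP : P <;> by_cases hQ : Q <;> simp [hP, hQ, div_mul_div_comm, mul_comm]


/-- Protocol 1 correctness: given a perfect `d`-box and a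
perfect `d'`-box, the protocol above simulates a `dd'`-box exactly. -/
theorem protocol1_correct (d d' : ℕ) (hd : 2 ≤ d) (hd' : 2 ≤ d') :
    ∀ (X Y : Fin 2) (a b : Fin (d * d')),
      protocol1 d d' X Y a b =
        if (b.val + (d * d' - a.val)) % (d * d') = X.val * Y.val
        then 1 / (d * d' : ℝ) else 0 := by
  intro X Y a b
  have hd0 : 0 < d := by omega
  have hd'0 : 0 < d' := by omega
  unfold protocol1
  rw [sum_pick hd0]
  unfold dBox
  obtain ⟨q, hq, r, hr, ha⟩ : ∃ q, q < d' ∧ ∃ r, r < d ∧ a.val = q * d + r :=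
    ⟨a.val / d, Nat.div_lt_of_lt_mul a.isLt, a.val % d, Nat.mod_lt _ hd0,
      (Nat.div_add_mod' _ _).symm⟩
  obtain ⟨t, ht, s, hs, hb⟩ : ∃ t, t < d' ∧ ∃ s, s < d ∧ b.val = t * d + s :=
    ⟨b.val / d, Nat.div_lt_of_lt_mul b.isLt, b.val % d, Nat.mod_lt _ hd0,
      (Nat.div_add_mod' _ _).symm⟩
  have har : a.val % d = r := by rw [ha, Nat.mul_add_mod', Nat.mod_eq_of_lt hr]
  have hbs : b.val % d = s := by rw [hb, Nat.mul_add_mod', Nat.mod_eq_of_lt hs]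
  have haq : a.val / d = q := by
    rw [ha, mul_comm q d, Nat.mul_add_div hd0, Nat.div_eq_of_lt hr, add_zero]
  have hbt : b.val / d = t := by
    rw [hb, mul_comm t d, Nat.mul_add_div hd0, Nat.div_eq_of_lt hs, add_zero]
  simp only [har, hbs, haq, hbt]
  rw [ha, hb]
  clear har hbs haq hbt ha hb a b
  -- helper facts
  have hqd : (q + 1) * d = q * d + d := by ring
  have htd : (t + 1) * d = t * d + d := by ring
  have hcomm : d * d' = d' * d := mul_comm d d'
  have hqd' : (q + 1) * d ≤ d' * d := Nat.mul_le_mul_right d hq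
  have htd' : (t + 1) * d ≤ d' * d := Nat.mul_le_mul_right d ht
  have hA : q * d + r < d * d' := by omega
  have hB : t * d + s < d * d' := by omega
  have hdd2 : 2 ≤ d * d' := by omega
  have hta : t ≤ t * d := Nat.le_mul_of_pos_right t hd0
  have hqr0 : t * d + s = q * d + r ↔ (t = q ∧ s = r) := qr_eq hr hs
  have hqr1 : t * d + s = (q + 1) * d + 0 ↔ (t = q + 1 ∧ s = 0) := qr_eq hd0 hs
  have hce : q + 1 = d' ↔ (q + 1) * d = d' * d := by
    constructor
    · intro h; rw [h]
    · exact fun h => Nat.eq_of_mul_eq_mul_right hd0 h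
  have hte : t = 0 ↔ t * d = 0 := by rw [Nat.mul_eq_zero]; omega
  rw [prod_ite]
  refine if_congr ?_ rfl rfl
  fin_cases X <;> fin_cases Y <;>
    simp only [Fin.isValue, Fin.val_zero, Fin.val_one, mul_zero, mul_one, zero_mul, one_mul,
      ite_self, apply_ite (Fin.val (n := 2))]
  · rw [mod_cond 0 hr hs, mod_cond 0 hq ht, mod_cond 0 hA hB]; omega
  · rw [mod_cond 0 hr hs, mod_cond 0 hq ht, mod_cond 0 hA hB]; omega
  · rw [mod_cond 0 hr hs, mod_cond 0 hq ht, mod_cond 0 hA hB]; omega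
  · by_cases hrd : r = d - 1
    · rw [if_pos hrd, mod_cond 1 hr hs, mod_cond 1 hq ht, mod_cond 1 hA hB]; omega
    · rw [if_neg hrd, mod_cond 1 hr hs, mod_cond 0 hq ht, mod_cond 1 hA hB]
      have hr2 : r + 1 < d := by omega
      have hqr2 : t * d + s = q * d + (r + 1) ↔ (t = q ∧ s = r + 1) := qr_eq hr2 hs
      omega
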